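/- Let {c_{jk}}_{j,k=1}^∞ ⊂ ℂ, let {b(n)}_{n=1}^∞ be a nonnegative sequence tending monotonically to infinity, let λ ≥ 2 be an integer, let p ≥ 1 and r ∈ ℕ. Assume j·k·c_{jk} → 0 as j + k → ∞, and that there is C > 0 such that for all k ∈ ℕ and all m ≥ λ: (Σ_{j=m}^{2m−1} |Δ_{r0}c_{jk}|^p)^{1/p} ≤ (C/m) · max_{b(m) ≤ M ≤ λ b(m)} Σ_{j=M}^{2M} |c_{jk}|. Then m^{1/p} · sup_{k ≥ n} ( k · Σ_{j=m}^∞ |Δ_{r0}c_{jk}| ) → 0 as m + n → ∞. -/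

import Mathlib

noncomputable section

lemma aux_holder {p : ℝ} (hp : 1 ≤ p) (s : Finset ℕ) (f : ℕ → ℝ) (hf : ∀ i ∈ s, 0 ≤ f i) :
    ∑ i ∈ s, f i ≤ (s.card : ℝ) ^ (1 - 1/p) * (∑ i ∈ s, f i ^ p) ^ (1/p) := by
  have hp0 : 0 < p := lt_of_lt_of_le one_pos hp
  rcases Nat.eq_zero_or_pos s.card with h0 | hcard
  · rw [Finset.card_eq_zero] at h0
    subst h0
    simp only [Finset.sum_empty, Finset.card_empty, Nat.cast_zero]
    positivity
  · have hn : (0:ℝ) < s.card := by exact_mod_cast hcard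
    have key := Real.arith_mean_le_rpow_mean s (fun _ => 1/(s.card:ℝ)) f
      (fun i _ => by positivity)
      (by rw [Finset.sum_const, nsmul_eq_mul]; exact mul_one_div_cancel hn.ne') hf hp
    simp only [← Finset.mul_sum] at key
    have h2 : ((1/(s.card:ℝ)) * ∑ i ∈ s, f i ^ p) ^ (1/p)
        = (1/(s.card:ℝ))^(1/p) * (∑ i ∈ s, f i ^ p) ^ (1/p) := by
      refine Real.mul_rpow (by positivity) ?_
      exact Finset.sum_nonneg fun i hi => Real.rpow_nonneg (hf i hi) p
    rw [h2] at key
    have h3 := mul_le_mul_of_nonneg_left key hn.le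
    have h4 : (s.card:ℝ) * ((1/(s.card:ℝ)) * ∑ i ∈ s, f i) = ∑ i ∈ s, f i := by
      field_simp
    rw [h4] at h3
    refine h3.trans (le_of_eq ?_)
    rw [← mul_assoc]
    congr 1
    rw [Real.rpow_sub hn, Real.rpow_one, one_div (s.card:ℝ),
      Real.inv_rpow hn.le]
    ring

lemma aux_geom {q : ℝ} (hq0 : 0 ≤ q) (hq1 : q < 1) (L : ℕ) :
    ∑ i ∈ Finset.range L, q ^ i ≤ (1 - q)⁻¹ := by
  have h1 : (0:ℝ) < 1 - q := by linarith
  rw [geom_sum_eq (ne_of_lt hq1) L]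
  have h2 : (q^L - 1)/(q - 1) = (1 - q^L)/(1 - q) := by
    rw [div_eq_div_iff (by linarith) (by linarith)]; ring
  rw [h2, div_le_iff₀ h1, inv_mul_cancel₀ (ne_of_gt h1)]
  have := pow_nonneg hq0 L
  linarith

lemma aux_dyadic (f : ℕ → ℝ) (a L : ℕ) :
    ∑ j ∈ Finset.Ico a (2^L * a), f j
      = ∑ i ∈ Finset.range L, ∑ j ∈ Finset.Ico (2^i * a) (2^(i+1) * a), f j := by
  induction L with
  | zero => simp
  | succ L ih =>
    rw [Finset.sum_range_succ, ← ih,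
      Finset.sum_Ico_consecutive f
        (Nat.le_mul_of_pos_left a (Nat.two_pow_pos L))
        (Nat.mul_le_mul_right a (Nat.pow_le_pow_right (by norm_num) (Nat.le_succ L)))]

set_option maxHeartbeats 2000000 in
theorem statement10 (c : ℕ → ℕ → ℂ) (b : ℕ → ℝ) (hb0 : ∀ n, 0 ≤ b n)
    (hbmono : Monotone b) (hbtop : Filter.Tendsto b Filter.atTop Filter.atTop)
    (lam : ℕ) (hlam : 2 ≤ lam) (p : ℝ) (hp : 1 ≤ p) (r : ℕ) (hr : 1 ≤ r)
    (C : ℝ) (hC : 0 < C)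
    (hsmall : ∀ ε : ℝ, 0 < ε → ∃ m₀ : ℕ, ∀ j k : ℕ, m₀ < j + k →
      (j : ℝ) * k * ‖c j k‖ < ε)
    (hineq : ∀ m k : ℕ, lam ≤ m → 1 ≤ k →
      ∃ M : ℕ, b m ≤ M ∧ (M : ℝ) ≤ lam * b m ∧
        (∑ j ∈ Finset.Icc m (2*m-1), ‖c j k - c (j+r) k‖ ^ p) ^ (1/p)
          ≤ C / m * ∑ j ∈ Finset.Icc M (2*M), ‖c j k‖) :
    ∀ ε : ℝ, 0 < ε → ∃ m₀ : ℕ, ∀ m n : ℕ, m₀ < m + n → 1 ≤ m → 1 ≤ n →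
      ∀ k : ℕ, n ≤ k →
        (m : ℝ) ^ (1/p) * (k : ℝ) *
          (∑' j : ℕ, if m ≤ j then ‖c j k - c (j+r) k‖ else 0) < ε := by
  intro ε hε
  have hp0 : 0 < p := lt_of_lt_of_le one_pos hp
  have hip0 : 0 < 1/p := by positivity
  have hip1 : 1/p ≤ 1 := by
    rw [div_le_one hp0]; exact hp
  set q : ℝ := (2:ℝ) ^ (-(1/p)) with hqdef
  have hq0 : 0 < q := Real.rpow_pos_of_pos two_pos _
  have hq1 : q < 1 := Real.rpow_lt_one_of_one_lt_of_neg one_lt_two (by linarith)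
  set S : ℝ := (1 - q)⁻¹ with hSdef
  have hS0 : 0 < S := inv_pos.2 (by linarith)
  -- N₁ : point from which b ≥ 1, and ≥ lam
  obtain ⟨N₁', hN₁'⟩ := Filter.eventually_atTop.1 (hbtop.eventually_ge_atTop 1)
  set N₁ : ℕ := max N₁' lam with hN₁def
  have hN₁lam : lam ≤ N₁ := le_max_right _ _
  have hN₁1 : 1 ≤ N₁ := le_trans (by omega) hN₁lam
  have hbN₁ : 1 ≤ b N₁ := hN₁' N₁ (le_max_left _ _)
  set K : ℝ := 2*(N₁:ℝ)^2 + 2*C*S + 1 with hKdef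
  have hK0 : 0 < K := by positivity
  set ε' : ℝ := ε / K with hε'def
  have hε'0 : 0 < ε' := by positivity
  obtain ⟨m₀', hm₀'⟩ := hsmall ε' hε'0
  obtain ⟨N₂', hN₂'⟩ := Filter.eventually_atTop.1 (hbtop.eventually_ge_atTop ((m₀':ℝ)+1))
  set N₂ : ℕ := max N₂' N₁ with hN₂def
  refine ⟨N₂ + m₀', fun m n hmn hm hn k hk => ?_⟩
  have hk1 : 1 ≤ k := le_trans hn hk
  have hkR : (1:ℝ) ≤ (k:ℝ) := by exact_mod_cast hk1
  have hkR0 : (0:ℝ) < k := by linarith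
  set m' : ℕ := max m N₁ with hm'def
  have hm'1 : 1 ≤ m' := le_trans hN₁1 (le_max_right _ _)
  have hcase : N₂ ≤ m ∨ m₀' < k := by omega
  -- smallness
  have hsm : ∀ j : ℕ, 1 ≤ j → m₀' < j + k → ‖c j k‖ ≤ ε' / ((j:ℝ) * k) := by
    intro j hj hjk
    have h := hm₀' j k hjk
    have hjR : (1:ℝ) ≤ (j:ℝ) := by exact_mod_cast hj
    have hjk0 : (0:ℝ) < (j:ℝ) * k := by nlinarith
    rw [le_div_iff₀ hjk0]
    nlinarith [norm_nonneg (c j k)]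
  -- block bound
  have hblock : ∀ t : ℕ, m' ≤ t →
      ∑ j ∈ Finset.Ico t (2*t), ‖c j k - c (j+r) k‖
        ≤ (2*C*ε'/k) * (t:ℝ) ^ (-(1/p)) := by
    intro t ht
    have htN₁ : N₁ ≤ t := le_trans (le_max_right _ _) ht
    have htlam : lam ≤ t := le_trans hN₁lam htN₁
    have ht1 : 1 ≤ t := le_trans hN₁1 htN₁
    have htR : (1:ℝ) ≤ (t:ℝ) := by exact_mod_cast ht1
    have htR0 : (0:ℝ) < t := by linarith
    obtain ⟨M, hM1, hM2, hM3⟩ := hineq t k htlam hk1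
    have hbt : 1 ≤ b t := le_trans hbN₁ (hbmono htN₁)
    have hM1' : 1 ≤ M := by
      have h1 : (1:ℝ) ≤ (M:ℝ) := le_trans hbt hM1
      exact_mod_cast h1
    have hMR : (1:ℝ) ≤ (M:ℝ) := by exact_mod_cast hM1'
    have hMR0 : (0:ℝ) < M := by linarith
    have hMk : ∀ j, M ≤ j → m₀' < j + k := by
      intro j hj
      rcases hcase with hmN₂ | hkm
      · have htN₂' : N₂' ≤ t := by
          have h1 : N₂ ≤ m := hmN₂
          have h2 : m ≤ m' := le_max_left _ _
          omega
        have hbt2 : (m₀':ℝ) + 1 ≤ b t := hN₂' t htN₂'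
        have hM4 : (m₀':ℝ) + 1 ≤ (M:ℝ) := le_trans hbt2 hM1
        have hM5 : m₀' + 1 ≤ M := by exact_mod_cast hM4
        omega
      · omega
    have hsumc : ∑ j ∈ Finset.Icc M (2*M), ‖c j k‖ ≤ 2*ε'/k := by
      have step1 : ∑ j ∈ Finset.Icc M (2*M), ‖c j k‖
          ≤ ∑ j ∈ Finset.Icc M (2*M), ε' / ((M:ℝ) * k) := by
        refine Finset.sum_le_sum fun j hj => ?_
        rw [Finset.mem_Icc] at hj
        have hjM : M ≤ j := hj.1
        have hj1 : 1 ≤ j := le_trans hM1' hjM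
        have hjR : (M:ℝ) ≤ (j:ℝ) := by exact_mod_cast hjM
        refine (hsm j hj1 (hMk j hjM)).trans ?_
        apply div_le_div_of_nonneg_left hε'0.le (by positivity)
        nlinarith
      have hcardI : (Finset.Icc M (2*M)).card = M + 1 := by
        rw [Nat.card_Icc]; omega
      rw [Finset.sum_const, hcardI, nsmul_eq_mul] at step1
      have hc : ((M+1 : ℕ) : ℝ) = (M:ℝ) + 1 := by push_cast; ring
      rw [hc] at step1
      refine step1.trans ?_
      have h1 : ((M:ℝ) + 1) * (ε' / ((M:ℝ) * k)) ≤ (2*(M:ℝ)) * (ε' / ((M:ℝ) * k)) := by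
        apply mul_le_mul_of_nonneg_right (by nlinarith) (by positivity)
      have h2 : (2*(M:ℝ)) * (ε' / ((M:ℝ) * k)) = 2*ε'/k := by
        have hM0 : (M:ℝ) ≠ 0 := ne_of_gt hMR0
        have hk0 : (k:ℝ) ≠ 0 := ne_of_gt hkR0
        field_simp
      rw [← h2]
      exact h1
    have hIco : Finset.Ico t (2*t) = Finset.Icc t (2*t-1) := by
      rw [← Finset.Ico_add_one_right_eq_Icc]
      congr 1
      omega
    rw [hIco]
    have hH := aux_holder hp (Finset.Icc t (2*t-1)) (fun j => ‖c j k - c (j+r) k‖)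
      (fun i _ => norm_nonneg _)
    have hcardt : ((Finset.Icc t (2*t-1)).card : ℝ) = (t:ℝ) := by
      have : (Finset.Icc t (2*t-1)).card = t := by rw [Nat.card_Icc]; omega
      rw [this]
    rw [hcardt] at hH
    refine hH.trans ?_
    have hmid : ((∑ j ∈ Finset.Icc t (2*t-1), ‖c j k - c (j+r) k‖ ^ p) ^ (1/p) : ℝ)
        ≤ C / t * (2*ε'/k) := by
      refine hM3.trans ?_
      apply mul_le_mul_of_nonneg_left hsumc (by positivity)
    calc (t:ℝ) ^ (1 - 1/p) * (∑ j ∈ Finset.Icc t (2*t-1), ‖c j k - c (j+r) k‖ ^ p) ^ (1/p)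
        ≤ (t:ℝ) ^ (1 - 1/p) * (C / t * (2*ε'/k)) := by
          apply mul_le_mul_of_nonneg_left hmid (Real.rpow_nonneg (by linarith) _)
      _ = (2*C*ε'/k) * (t:ℝ) ^ (-(1/p)) := by
          rw [show (1 - 1/p) = 1 + (-(1/p)) by ring, Real.rpow_add htR0, Real.rpow_one]
          field_simp
  -- dyadic bound
  have h2i : ∀ i : ℕ, ((2:ℝ)^i) ^ (-(1/p)) = q ^ i := by
    intro i
    rw [← Real.rpow_natCast (2:ℝ) i, ← Real.rpow_mul (by norm_num),
      mul_comm ((i:ℕ):ℝ) (-(1/p)), Real.rpow_mul (by norm_num), hqdef,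
      Real.rpow_natCast]
  have hdy : ∀ L : ℕ, ∑ j ∈ Finset.Ico m' (2^L * m'), ‖c j k - c (j+r) k‖
      ≤ (2*C*ε'/k) * (m':ℝ) ^ (-(1/p)) * S := by
    intro L
    rw [aux_dyadic]
    have step1 : ∀ i ∈ Finset.range L,
        ∑ j ∈ Finset.Ico (2^i * m') (2^(i+1) * m'), ‖c j k - c (j+r) k‖
          ≤ (2*C*ε'/k) * (m':ℝ) ^ (-(1/p)) * q ^ i := by
      intro i _
      have he : 2^(i+1) * m' = 2 * (2^i * m') := by ring
      have hb := hblock (2^i * m') (Nat.le_mul_of_pos_left m' (Nat.two_pow_pos i))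
      rw [he]
      refine hb.trans (le_of_eq ?_)
      have hc : ((2^i * m' : ℕ) : ℝ) = (2:ℝ)^i * (m':ℝ) := by push_cast; ring
      rw [hc, Real.mul_rpow (by positivity) (by positivity), h2i]
      ring
    calc ∑ i ∈ Finset.range L, ∑ j ∈ Finset.Ico (2^i * m') (2^(i+1) * m'), ‖c j k - c (j+r) k‖
        ≤ ∑ i ∈ Finset.range L, (2*C*ε'/k) * (m':ℝ) ^ (-(1/p)) * q ^ i :=
          Finset.sum_le_sum step1
      _ = (2*C*ε'/k) * (m':ℝ) ^ (-(1/p)) * ∑ i ∈ Finset.range L, q ^ i := by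
          rw [Finset.mul_sum]
      _ ≤ (2*C*ε'/k) * (m':ℝ) ^ (-(1/p)) * S := by
          apply mul_le_mul_of_nonneg_left (aux_geom hq0.le hq1 L) (by positivity)
  -- initial bound
  have hinit : ∑ j ∈ Finset.Ico m m', ‖c j k - c (j+r) k‖ ≤ (2*ε'/k) * ((m':ℝ) - m) := by
    rcases hcase with hmN₂ | hkm
    · have hmm' : m' = m := max_eq_left (by omega)
      rw [hmm']
      simp
    · have step1 : ∀ j ∈ Finset.Ico m m', ‖c j k - c (j+r) k‖ ≤ 2*ε'/k := by
        intro j hj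
        rw [Finset.mem_Ico] at hj
        have hj1 : 1 ≤ j := le_trans hm hj.1
        have hjR : (1:ℝ) ≤ (j:ℝ) := by exact_mod_cast hj1
        have hjrR : (1:ℝ) ≤ ((j+r:ℕ):ℝ) := by
          have : 1 ≤ j + r := by omega
          exact_mod_cast this
        have h1 := hsm j hj1 (by omega)
        have h2 := hsm (j+r) (by omega) (by omega)
        have h3 : ε' / ((j:ℝ)*k) ≤ ε'/k := by
          apply div_le_div_of_nonneg_left hε'0.le (by positivity)
          nlinarith
        have h4 : ε' / (((j+r:ℕ):ℝ)*k) ≤ ε'/k := by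
          apply div_le_div_of_nonneg_left hε'0.le (by positivity)
          nlinarith
        calc ‖c j k - c (j+r) k‖ ≤ ‖c j k‖ + ‖c (j+r) k‖ := norm_sub_le _ _
          _ ≤ ε'/k + ε'/k := add_le_add (h1.trans h3) (h2.trans h4)
          _ = 2*ε'/k := by ring
      calc ∑ j ∈ Finset.Ico m m', ‖c j k - c (j+r) k‖
          ≤ ∑ _j ∈ Finset.Ico m m', (2*ε'/k) := Finset.sum_le_sum step1
        _ = ((m' - m : ℕ) : ℝ) * (2*ε'/k) := by
            rw [Finset.sum_const, Nat.card_Ico, nsmul_eq_mul]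
        _ = (2*ε'/k) * ((m':ℝ) - m) := by
            rw [Nat.cast_sub (le_max_left _ _)]
            ring
  -- partial sums and tsum
  set f : ℕ → ℝ := fun j => if m ≤ j then ‖c j k - c (j+r) k‖ else 0 with hfdef
  have hf0 : ∀ j, 0 ≤ f j := by
    intro j
    rw [hfdef]
    dsimp only
    split
    · exact norm_nonneg _
    · exact le_refl 0
  have hmm' : (m:ℝ) ≤ (m':ℝ) := by exact_mod_cast le_max_left m N₁
  set B : ℝ := (2*ε'/k) * ((m':ℝ) - m) + (2*C*ε'/k) * (m':ℝ) ^ (-(1/p)) * S with hBdef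
  have hB0 : 0 ≤ B := by
    apply add_nonneg
    · apply mul_nonneg (by positivity)
      linarith
    · positivity
  have hpart : ∀ N, ∑ j ∈ Finset.range N, f j ≤ B := by
    intro N
    rcases le_or_gt N m with hNm | hmN
    · have : ∑ j ∈ Finset.range N, f j = 0 := by
        apply Finset.sum_eq_zero
        intro j hj
        rw [Finset.mem_range] at hj
        rw [hfdef]
        simp only [if_neg (by omega : ¬ m ≤ j)]
      rw [this]; exact hB0
    · have hNle : N ≤ 2^N * m' := by
        have h1 : N < 2^N := Nat.lt_two_pow_self
        have h2 : 2^N ≤ 2^N * m' := Nat.le_mul_of_pos_right _ (by omega)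
        omega
      have hmle : m ≤ 2^N * m' := by
        have := le_max_left m N₁
        omega
      have e1 : ∑ j ∈ Finset.range N, f j = ∑ j ∈ Finset.Ico 0 m, f j + ∑ j ∈ Finset.Ico m N, f j := by
        rw [Finset.range_eq_Ico, ← Finset.sum_Ico_consecutive f (Nat.zero_le m) hmN.le]
      have e2 : ∑ j ∈ Finset.Ico 0 m, f j = 0 := by
        apply Finset.sum_eq_zero
        intro j hj
        rw [Finset.mem_Ico] at hj
        rw [hfdef]
        simp only [if_neg (by omega : ¬ m ≤ j)]
      have e3 : ∑ j ∈ Finset.Ico m N, f j = ∑ j ∈ Finset.Ico m N, ‖c j k - c (j+r) k‖ := by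
        apply Finset.sum_congr rfl
        intro j hj
        rw [Finset.mem_Ico] at hj
        rw [hfdef]
        simp only [if_pos hj.1]
      rw [e1, e2, e3, zero_add]
      have e4 : ∑ j ∈ Finset.Ico m N, ‖c j k - c (j+r) k‖
          ≤ ∑ j ∈ Finset.Ico m (2^N * m'), ‖c j k - c (j+r) k‖ := by
        apply Finset.sum_le_sum_of_subset_of_nonneg
        · exact Finset.Ico_subset_Ico le_rfl hNle
        · intro j _ _; exact norm_nonneg _
      have e5 : ∑ j ∈ Finset.Ico m (2^N * m'), ‖c j k - c (j+r) k‖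
          = ∑ j ∈ Finset.Ico m m', ‖c j k - c (j+r) k‖
            + ∑ j ∈ Finset.Ico m' (2^N * m'), ‖c j k - c (j+r) k‖ := by
        rw [Finset.sum_Ico_consecutive _ (le_max_left m N₁)
          (Nat.le_mul_of_pos_left m' (Nat.two_pow_pos N))]
      refine e4.trans ?_
      rw [e5]
      exact add_le_add hinit (hdy N)
  have htsum : (∑' j, f j) ≤ B := Real.tsum_le_of_sum_range_le hf0 hpart
  -- final estimate
  have hmR : (1:ℝ) ≤ (m:ℝ) := by exact_mod_cast hm
  have hfinal : (m:ℝ) ^ (1/p) * (k:ℝ) * (∑' j, f j) ≤ (m:ℝ) ^ (1/p) * (k:ℝ) * B := by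
    apply mul_le_mul_of_nonneg_left htsum (by positivity)
  refine hfinal.trans_lt ?_
  -- bound (m)^(1/p) * k * B
  have hb1 : ((m':ℝ) - m) * (m:ℝ)^(1/p) ≤ (N₁:ℝ)^2 := by
    rcases le_or_gt N₁ m with h | h
    · have : m' = m := max_eq_left h
      rw [this]
      simp
    · have hm'N₁ : m' = N₁ := max_eq_right h.le
      have hmN₁R : (m:ℝ) ≤ N₁ := by exact_mod_cast h.le
      have h1 : (m:ℝ)^(1/p) ≤ (m:ℝ) := by
        calc (m:ℝ)^(1/p) ≤ (m:ℝ)^(1:ℝ) := Real.rpow_le_rpow_of_exponent_le hmR hip1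
          _ = (m:ℝ) := Real.rpow_one _
      have h2 : ((m':ℝ) - m) ≤ (N₁:ℝ) := by
        rw [hm'N₁]
        linarith
      have h3 : (0:ℝ) ≤ (m':ℝ) - m := by linarith [hmm']
      have h4 : (m:ℝ)^(1/p) ≤ (N₁:ℝ) := h1.trans hmN₁R
      have h5 : (0:ℝ) ≤ (m:ℝ)^(1/p) := by positivity
      nlinarith
  have hb2 : (m:ℝ)^(1/p) * (m':ℝ)^(-(1/p)) ≤ 1 := by
    have hm'R0 : (0:ℝ) < (m':ℝ) := by
      have : (1:ℝ) ≤ (m':ℝ) := by exact_mod_cast hm'1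
      linarith
    rw [Real.rpow_neg hm'R0.le, ← div_eq_mul_inv,
      div_le_one (Real.rpow_pos_of_pos hm'R0 _)]
    exact Real.rpow_le_rpow (by linarith) hmm' hip0.le
  have hexp : (m:ℝ) ^ (1/p) * (k:ℝ) * B
      = 2*ε' * (((m':ℝ) - m) * (m:ℝ)^(1/p)) + 2*C*ε'*S * ((m:ℝ)^(1/p) * (m':ℝ)^(-(1/p))) := by
    rw [hBdef]
    field_simp
  rw [hexp]
  have hfin1 : 2*ε' * (((m':ℝ) - m) * (m:ℝ)^(1/p)) ≤ 2*ε' * (N₁:ℝ)^2 :=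
    mul_le_mul_of_nonneg_left hb1 (by positivity)
  have hfin2 : 2*C*ε'*S * ((m:ℝ)^(1/p) * (m':ℝ)^(-(1/p))) ≤ 2*C*ε'*S * 1 :=
    mul_le_mul_of_nonneg_left hb2 (by positivity)
  have hKε : K * ε' = ε := by
    rw [hε'def]
    field_simp
  nlinarith [hε'0, hS0]

end
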